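/- Logarithmic growth of multiple polylogarithms at z = 1: for every word w over {x0, x1} of length r, there exists a constant C > 0 such that |Li(w; z)| ≤ C·(1 + |log(1−z)|^r) for all z ∈ (1/2, 1); in particular, Li(w; z) diverges at most of logarithmic order as z → 1⁻. -/

import Mathlib

/-!
Every word `w` decomposes as `Σ_j w_j ⧢ x0^j` with `w_j ∈ S^0` made of words of length
`|w| - j`: existence by induction on the number of trailing `x0`'s of `w`, uniqueness because
deleting a final `x0` inverts `· ⧢ x0` on `S^0`. For `z ∈ (1/2, 1)` we have `|log z| < 1`, so it
suffices to bound each `Li(w_j; z)`, and a multiple polylogarithm of depth `s ≤ r` is at most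
`(-log (1 - z))^s`.
-/

open scoped BigOperators

namespace MZVRH

noncomputable section

/-- A word over the two-letter alphabet: `false` stands for `x0`, `true` for `x1`. -/
abbrev Word : Type := List Bool

/-- The shuffle algebra `S`: the free ℂ-vector space on words. -/
abbrev S : Type := Word →₀ ℂ

/-- The word `w` viewed as an element of `S`. -/
def wordS (w : Word) : S := Finsupp.single w 1

/-- Shuffle product of two words, as an element of `S`. -/
def shWord : Word → Word → S
  | [], v => Finsupp.single v 1
  | u, [] => Finsupp.single u 1
  | a :: u, b :: v =>
      (shWord u (b :: v)).mapDomain (a :: ·)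
        + (shWord (a :: u) v).mapDomain (b :: ·)
  termination_by u v => u.length + v.length
  decreasing_by all_goals simp [List.length_cons]

/-- The bilinear extension of the shuffle product to `S`. -/
def sh (x y : S) : S := x.sum fun u a => y.sum fun v b => (a * b) • shWord u v

/-- The word `x0^j`. -/
def x0pow (j : ℕ) : Word := List.replicate j false

/-- The word `x1^i`. -/
def x1pow (i : ℕ) : Word := List.replicate i true

/-- A word is empty or ends in `x1`. -/
def EndsInX1 (w : Word) : Prop := w = [] ∨ w.getLast? = some true

/-- A word is empty or begins with `x0` and ends in `x1`. -/
def BeginsEndsX0X1 (w : Word) : Prop :=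
  w = [] ∨ (w.head? = some false ∧ w.getLast? = some true)

/-- Membership in the subspace `S^0` spanned by the empty word and words ending in `x1`. -/
def InS0 (x : S) : Prop := ∀ w ∈ x.support, EndsInX1 w

/-- Membership in the subspace `S^{10}` spanned by the empty word and words beginning
with `x0` and ending in `x1`. -/
def InS10 (x : S) : Prop := ∀ w ∈ x.support, BeginsEndsX0X1 w

/-- `Σ_j w_j ⧢ x0^j` for a finitely supported family `f : ℕ →₀ S`. -/
def decomp0Sum (f : ℕ →₀ S) : S := f.sum fun j w => sh w (wordS (x0pow j))

/-- `Σ_{i,j} x1^i ⧢ w_{ij} ⧢ x0^j` for a finitely supported family `f : ℕ × ℕ →₀ S`. -/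
def decomp10Sum (f : ℕ × ℕ →₀ S) : S :=
  f.sum fun p w => sh (wordS (x1pow p.1)) (sh w (wordS (x0pow p.2)))

/-- `f` is a decomposition of `u` with coefficients in `S^0`. -/
def HasDecomp0 (u : S) (f : ℕ →₀ S) : Prop := (∀ j, InS0 (f j)) ∧ u = decomp0Sum f

/-- `f` is a decomposition of `u` with coefficients in `S^{10}`. -/
def HasDecomp10 (u : S) (f : ℕ × ℕ →₀ S) : Prop :=
  (∀ p, InS10 (f p)) ∧ u = decomp10Sum f

open Classical in
/-- The regularization map `reg^0 : S → S^0`, the constant term of the decomposition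
of `u` as a polynomial in `x0` with coefficients in `S^0`. -/
def reg0 (u : S) : S := if h : ∃ f, HasDecomp0 u f then h.choose 0 else 0

open Classical in
/-- The regularization map `reg^{10} : S → S^{10}`, the constant term of the decomposition
of `u` as a polynomial in `x0, x1` with coefficients in `S^{10}`. -/
def reg10 (u : S) : S := if h : ∃ f, HasDecomp10 u f then h.choose (0, 0) else 0

/-- `τ`: reverse the word and exchange `x0` with `x1`. -/
def tau (w : Word) : Word := (w.map (fun b => !b)).reverse

/-- The composition `(k1, …, kr)` attached to a word `x0^{k1-1} x1 ⋯ x0^{kr-1} x1 ∈ S^0`. -/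
def toComp : Word → List ℕ
  | [] => []
  | false :: w =>
      match toComp w with
      | [] => []
      | k :: ks => (k + 1) :: ks
  | true :: w => 1 :: toComp w

/-- Strictly decreasing tuples of positive integers `n1 > n2 > ⋯ > nr > 0`. -/
def Tuples (r : ℕ) : Type := {f : Fin r → ℕ // StrictAnti f ∧ ∀ i, 0 < f i}

/-- The multiple polylogarithm `Li_{k1,…,kr}(z) = Σ_{n1 > ⋯ > nr > 0} z^{n1}/(n1^{k1} ⋯ nr^{kr})`,
attached to a composition `ks = (k1, …, kr)`; equal to `1` for the empty composition. -/
def LiComp (ks : List ℕ) (z : ℂ) : ℂ :=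
  ∑' n : Tuples ks.length,
    (if h : 0 < ks.length then z ^ n.1 ⟨0, h⟩ else 1) /
      ∏ i : Fin ks.length, (n.1 i : ℂ) ^ ks.get i

/-- The multiple zeta value `ζ(k1,…,kr) = Σ_{n1 > ⋯ > nr > 0} 1/(n1^{k1} ⋯ nr^{kr})`
attached to a composition; equal to `1` for the empty composition. -/
def zetaComp (ks : List ℕ) : ℂ :=
  ∑' n : Tuples ks.length, 1 / ∏ i : Fin ks.length, (n.1 i : ℂ) ^ ks.get i

/-- The ℂ-linear extension of `w ↦ Li(w; z)` to elements of `S` supported on `S^0` words. -/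
def LiS0 (x : S) (z : ℂ) : ℂ := x.sum fun w c => c * LiComp (toComp w) z

/-- The ℂ-linear extension of `w ↦ ζ(w)` to elements of `S` supported on `S^{10}` words. -/
def zetaS (x : S) : ℂ := x.sum fun w c => c * zetaComp (toComp w)

open Classical in
/-- The extended multiple polylogarithm on `S`:
`Li(u; z) = Σ_j Li(w_j; z) (log z)^j / j!` where `u = Σ_j w_j ⧢ x0^j` with `w_j ∈ S^0`. -/
def Li (u : S) (z : ℂ) : ℂ :=
  if h : ∃ f, HasDecomp0 u f then
    h.choose.sum fun j w => LiS0 w z * Complex.log z ^ j / (Nat.factorial j : ℂ)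
  else 0

/-- The domain `D0 = ℂ ∖ {x ∈ ℝ : x ≥ 1}`. -/
def D0 : Set ℂ := {z | ¬ (z.im = 0 ∧ 1 ≤ z.re)}

/-- The domain `D1 = ℂ ∖ {x ∈ ℝ : x ≤ 0}`. -/
def D1 : Set ℂ := {z | ¬ (z.im = 0 ∧ z.re ≤ 0)}

/-- The ℂ-linear extension of a word-indexed family of functions to `S`. -/
def extLin (h : Word → ℂ → ℂ) (x : S) (z : ℂ) : ℂ := x.sum fun w c => c * h w z

/-- A solution of the additive Riemann–Hilbert problem for multiple polylogarithms. -/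
def RHSol (h0 h1 : Word → ℂ → ℂ) : Prop :=
  -- (0) shuffle homomorphisms with prescribed value on `x0`
  (∀ z ∈ D0 ∩ D1,
      (h0 [] z = 1 ∧ h1 [] z = 1) ∧
      (∀ u v : Word,
          extLin h0 (sh (wordS u) (wordS v)) z = h0 u z * h0 v z ∧
          extLin h1 (sh (wordS u) (wordS v)) z = h1 u z * h1 v z) ∧
      h0 [false] z = Complex.log z ∧ h1 [false] z = Complex.log (1 - z)) ∧
  -- (1) holomorphy and the functional equation
  (∀ w : Word,
      DifferentiableOn ℂ (fun z => extLin h0 (reg0 (wordS w)) z) D0 ∧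
      DifferentiableOn ℂ (fun z => extLin h1 (reg0 (wordS w)) z) D1 ∧
      ∀ z ∈ D0 ∩ D1,
        ∑ k ∈ Finset.range (w.length + 1),
            h1 (tau (w.take k)) z * h0 (w.drop k) z = zetaS (reg10 (wordS w))) ∧
  -- (2) asymptotic condition at infinity
  (∀ w : Word,
      Filter.Tendsto (deriv fun z => extLin h0 (reg0 (wordS w)) z)
        (Bornology.cobounded ℂ ⊓ Filter.principal D0) (nhds 0) ∧
      Filter.Tendsto (deriv fun z => extLin h1 (reg0 (wordS w)) z)
        (Bornology.cobounded ℂ ⊓ Filter.principal D1) (nhds 0)) ∧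
  -- (3) normalization at the origin
  (∀ w : Word, extLin h0 (reg0 (wordS w)) 0 = 0)

lemma shWord_nil_left (v : Word) : shWord [] v = wordS v := by
  cases v <;> simp [shWord, wordS]

lemma shWord_nil_right (u : Word) : shWord u [] = wordS u := by
  cases u <;> simp [shWord, wordS]

lemma shWord_cons_cons (a b : Bool) (u v : Word) :
    shWord (a :: u) (b :: v) =
      (shWord u (b :: v)).mapDomain (a :: ·) + (shWord (a :: u) v).mapDomain (b :: ·) := by
  rw [shWord]

lemma mapDomain_append_cons_comm (a b : Bool) (x : S) :
    (x.mapDomain (· ++ [b])).mapDomain (a :: ·) = (x.mapDomain (a :: ·)).mapDomain (· ++ [b]) := by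
  rw [← Finsupp.mapDomain_comp, ← Finsupp.mapDomain_comp]
  rfl

theorem shWord_append_singleton (a b : Bool) : ∀ u v : Word,
    shWord (u ++ [a]) (v ++ [b]) =
      (shWord u (v ++ [b])).mapDomain (· ++ [a]) + (shWord (u ++ [a]) v).mapDomain (· ++ [b])
  | [], [] => by
    simp only [List.nil_append, shWord_cons_cons, shWord_nil_left, shWord_nil_right, wordS,
      Finsupp.mapDomain_single, List.singleton_append]
    abel
  | [], c :: v => by
    have ih := shWord_append_singleton a b [] v
    simp only [List.nil_append, shWord_nil_left, wordS] at ih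
    simp only [List.nil_append, List.cons_append, shWord_cons_cons, shWord_nil_left, wordS,
      ih, Finsupp.mapDomain_add, Finsupp.mapDomain_single, mapDomain_append_cons_comm]
    abel
  | c :: u, [] => by
    have ih := shWord_append_singleton a b u []
    simp only [List.nil_append, shWord_nil_right, wordS] at ih
    simp only [List.nil_append, List.cons_append, shWord_cons_cons, shWord_nil_right, wordS,
      ih, Finsupp.mapDomain_add, Finsupp.mapDomain_single, mapDomain_append_cons_comm]
    abel
  | c :: u, d :: v => by
    have ih₁ := shWord_append_singleton a b u (d :: v)
    have ih₂ := shWord_append_singleton a b (c :: u) v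
    simp only [List.cons_append] at ih₁ ih₂ ⊢
    rw [shWord_cons_cons, ih₁, ih₂, shWord_cons_cons (v := v ++ [b]),
      shWord_cons_cons (u := u ++ [a])]
    simp only [Finsupp.mapDomain_add, mapDomain_append_cons_comm]
    abel
termination_by u v => u.length + v.length

theorem shWord_mem_supported_length : ∀ u v : Word,
    shWord u v ∈ Finsupp.supported ℂ ℂ {w : Word | w.length = u.length + v.length}
  | [], v => by
    rw [shWord_nil_left]
    exact Finsupp.single_mem_supported ℂ _ (by simp)
  | a :: u, [] => by
    rw [shWord_nil_right]
    exact Finsupp.single_mem_supported ℂ _ (by simp)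
  | a :: u, b :: v => by
    classical
    rw [shWord_cons_cons]
    refine Submodule.add_mem _ ?_ ?_ <;> intro w hw <;>
      obtain ⟨w', hw', rfl⟩ := Finset.mem_image.mp (Finsupp.mapDomain_support hw)
    · have := shWord_mem_supported_length u (b :: v) hw'
      simp_all; omega
    · have := shWord_mem_supported_length (a :: u) v hw'
      simp_all; omega
termination_by u v => u.length + v.length

lemma sh_wordS_left (u : Word) (y : S) : sh (wordS u) y = y.sum fun v b => b • shWord u v := by
  rw [sh, wordS, Finsupp.sum_single_index (by simp)]
  simp

lemma sh_wordS_wordS (u v : Word) : sh (wordS u) (wordS v) = shWord u v := by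
  rw [sh_wordS_left, wordS, Finsupp.sum_single_index (by simp), one_smul]

def shRight (y : S) : S →ₗ[ℂ] S := Finsupp.linearCombination ℂ fun u => sh (wordS u) y

lemma shRight_apply (x y : S) : shRight y x = sh x y := by
  rw [shRight, Finsupp.linearCombination_apply, sh]
  refine Finsupp.sum_congr fun u _ => ?_
  rw [sh_wordS_left, Finsupp.smul_sum]
  simp only [mul_smul]

lemma sh_wordS_nil_right (x : S) : sh x (wordS []) = x := by
  rw [← shRight_apply, shRight, Finsupp.linearCombination_apply]
  simp only [sh_wordS_wordS, shWord_nil_right]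
  simp only [wordS, Finsupp.smul_single_one]
  exact x.sum_single

def decomp0 : (ℕ →₀ S) →ₗ[ℂ] S := Finsupp.lsum ℂ fun j => shRight (wordS (x0pow j))

lemma decomp0_apply (f : ℕ →₀ S) : decomp0 f = decomp0Sum f := by
  rw [decomp0, Finsupp.lsum_apply]
  exact Finsupp.sum_congr fun j _ => shRight_apply _ _

lemma inS0_iff_mem_supported (x : S) :
    InS0 x ↔ x ∈ Finsupp.supported ℂ ℂ {w : Word | EndsInX1 w} :=
  Iff.rfl

def dropLastX0 : S →ₗ[ℂ] S :=
  Finsupp.linearCombination ℂ fun w => if w.getLast? = some false then wordS w.dropLast else 0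

lemma dropLastX0_mapDomain_append_false (x : S) : dropLastX0 (x.mapDomain (· ++ [false])) = x := by
  rw [dropLastX0, Finsupp.linearCombination_mapDomain]
  simp only [Function.comp_def, List.getLast?_concat, List.dropLast_concat, if_true]
  simp [Finsupp.linearCombination_apply, wordS]

lemma dropLastX0_mapDomain_append_true (x : S) : dropLastX0 (x.mapDomain (· ++ [true])) = 0 := by
  rw [dropLastX0, Finsupp.linearCombination_mapDomain]
  simp [Function.comp_def, Finsupp.linearCombination_apply]

lemma dropLastX0_eq_zero_of_inS0 {x : S} (hx : InS0 x) : dropLastX0 x = 0 := by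
  rw [dropLastX0, Finsupp.linearCombination_apply]
  refine Finset.sum_eq_zero fun w hw => ?_
  rcases hx w hw with rfl | h <;> simp [*]

lemma dropLastX0_shWord_x0pow_succ {u : Word} (hu : EndsInX1 u) (j : ℕ) :
    dropLastX0 (shWord u (x0pow (j + 1))) = shWord u (x0pow j) := by
  rcases hu with rfl | h
  · rw [shWord_nil_left, shWord_nil_left, x0pow, List.replicate_succ', wordS,
      ← Finsupp.mapDomain_single (f := (· ++ [false])), dropLastX0_mapDomain_append_false]
    rfl
  · obtain ⟨u, rfl⟩ : ∃ u', u = u' ++ [true] := by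
      obtain ⟨u', b, rfl⟩ := List.eq_nil_or_concat u |>.resolve_left (by rintro rfl; simp at h)
      simp_all
    rw [x0pow, List.replicate_succ', shWord_append_singleton, map_add,
      dropLastX0_mapDomain_append_true, dropLastX0_mapDomain_append_false, zero_add]
    rfl

lemma dropLastX0_sh_x0pow_succ {x : S} (hx : InS0 x) (j : ℕ) :
    dropLastX0 (sh x (wordS (x0pow (j + 1)))) = sh x (wordS (x0pow j)) := by
  rw [← shRight_apply, ← shRight_apply, shRight, shRight, Finsupp.linearCombination_apply,
    Finsupp.linearCombination_apply, map_finsuppSum]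
  simp only [map_smul, sh_wordS_wordS]
  exact Finsupp.sum_congr fun u hu => by rw [dropLastX0_shWord_x0pow_succ (hx u hu)]

lemma eq_zero_of_sum_sh_x0pow_eq_zero {g : ℕ → S} (hg : ∀ j, InS0 (g j)) :
    ∀ N, ∑ j ∈ Finset.range N, sh (g j) (wordS (x0pow j)) = 0 → ∀ j < N, g j = 0 := by
  intro N
  induction N generalizing g with
  | zero => simp
  | succ N ih =>
    intro h
    have hsucc : ∀ j < N, g (j + 1) = 0 := by
      refine ih (fun j => hg (j + 1)) ?_
      have := congrArg dropLastX0 h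
      rwa [map_sum, map_zero, Finset.sum_range_succ', x0pow, List.replicate_zero,
        sh_wordS_nil_right, dropLastX0_eq_zero_of_inS0 (hg 0), add_zero,
        Finset.sum_congr rfl fun j _ => dropLastX0_sh_x0pow_succ (hg (j + 1)) j] at this
    have hzero : g 0 = 0 := by
      rwa [Finset.sum_range_succ', Finset.sum_eq_zero fun j hj => by
        rw [hsucc j (Finset.mem_range.mp hj), ← shRight_apply, map_zero], zero_add,
        x0pow, List.replicate_zero, sh_wordS_nil_right] at h
    rintro (_ | j) hj
    · exact hzero
    · exact hsucc j (by omega)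

lemma eq_zero_of_decomp0Sum_eq_zero {f : ℕ →₀ S} (hf : ∀ j, InS0 (f j)) (h : decomp0Sum f = 0) :
    f = 0 := by
  obtain ⟨N, hN⟩ := f.support.exists_nat_subset_range
  have hvanish := eq_zero_of_sum_sh_x0pow_eq_zero hf N <| by
    rwa [decomp0Sum, Finsupp.sum_of_support_subset f hN _ fun j _ => by
      rw [← shRight_apply, map_zero]] at h
  ext1 j
  by_contra hj
  exact hj (hvanish j (Finset.mem_range.mp (hN (Finsupp.mem_support_iff.mpr hj))))

theorem HasDecomp0.unique {u : S} {f f' : ℕ →₀ S} (hf : HasDecomp0 u f) (hf' : HasDecomp0 u f') :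
    f = f' := by
  refine sub_eq_zero.mp (eq_zero_of_decomp0Sum_eq_zero (fun j => ?_) ?_)
  · rw [inS0_iff_mem_supported, Finsupp.sub_apply]
    exact sub_mem (hf.1 j) (hf'.1 j)
  · rw [← decomp0_apply, map_sub, decomp0_apply, decomp0_apply, ← hf.2, ← hf'.2, sub_self]

lemma Li_eq_of_hasDecomp0 {u : S} {f : ℕ →₀ S} (hf : HasDecomp0 u f) (z : ℂ) :
    Li u z = f.sum fun j w => LiS0 w z * Complex.log z ^ j / (Nat.factorial j : ℂ) := by
  have hex : ∃ f, HasDecomp0 u f := ⟨f, hf⟩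
  rw [Li, dif_pos hex, hex.choose_spec.unique hf]

def trailingX0 (w : Word) : ℕ := (w.rtakeWhile (! ·)).length

lemma trailingX0_append_false (w : Word) : trailingX0 (w ++ [false]) = trailingX0 w + 1 := by
  simp [trailingX0]

lemma trailingX0_append_true (w : Word) : trailingX0 (w ++ [true]) = 0 := by
  simp [trailingX0]

lemma exists_endsInX1_append_x0pow (w : Word) :
    ∃ v, EndsInX1 v ∧ w = v ++ x0pow (trailingX0 w) := by
  induction w using List.reverseRecOn with
  | nil => exact ⟨[], Or.inl rfl, rfl⟩
  | append_singleton w b ih =>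
    cases b with
    | false =>
      obtain ⟨v, hv, hw⟩ := ih
      refine ⟨v, hv, ?_⟩
      rw [trailingX0_append_false, x0pow, List.replicate_succ', ← List.append_assoc, ← x0pow, ← hw]
    | true => exact ⟨w ++ [true], Or.inr (by simp), by simp [trailingX0_append_true, x0pow]⟩

/-- Only the shuffle `v x0^t` keeps all of `x0^t` behind the last `x1` of `v`. -/
lemma shWord_x0pow_sub_mem_supported {v : Word} (hv : EndsInX1 v) (t : ℕ) :
    shWord v (x0pow t) - wordS (v ++ x0pow t) ∈
      Finsupp.supported ℂ ℂ {w : Word | trailingX0 w < t} := by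
  classical
  induction t with
  | zero => simp [x0pow, shWord_nil_right]
  | succ t ih =>
    rcases hv with rfl | h
    · simp [shWord_nil_left]
    obtain ⟨v, rfl⟩ : ∃ v', v = v' ++ [true] := by
      obtain ⟨v', b, rfl⟩ := List.eq_nil_or_concat v |>.resolve_left (by rintro rfl; simp at h)
      simp_all
    have hsplit : shWord (v ++ [true]) (x0pow (t + 1)) - wordS (v ++ [true] ++ x0pow (t + 1)) =
        (shWord v (x0pow (t + 1))).mapDomain (· ++ [true]) +
          (shWord (v ++ [true]) (x0pow t) - wordS (v ++ [true] ++ x0pow t)).mapDomain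
            (· ++ [false]) := by
      rw [x0pow, List.replicate_succ', shWord_append_singleton, Finsupp.mapDomain_sub, wordS,
        wordS, Finsupp.mapDomain_single, List.append_assoc, List.append_assoc, List.append_assoc]
      abel
    rw [hsplit]
    refine Submodule.add_mem _ ?_ ?_ <;> intro w hw <;>
      obtain ⟨w', hw', rfl⟩ := Finset.mem_image.mp (Finsupp.mapDomain_support hw)
    · simp [trailingX0_append_true]
    · simpa [trailingX0_append_false] using ih hw'

def gradedFamilies (ℓ : ℕ) : Submodule ℂ (ℕ →₀ S) where
  carrier := {f | ∀ j, ∀ u ∈ (f j).support, EndsInX1 u ∧ u.length + j = ℓ}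
  add_mem' {f g} hf hg j u hu := by
    classical
    rcases Finset.mem_union.mp (Finsupp.support_add hu) with hu | hu
    exacts [hf j u hu, hg j u hu]
  zero_mem' := by simp
  smul_mem' c f hf j u hu := hf j u (Finsupp.support_smul hu)

theorem wordS_mem_map_decomp0 (w : Word) :
    wordS w ∈ (gradedFamilies w.length).map decomp0 := by
  induction h : trailingX0 w using Nat.strong_induction_on generalizing w with
  | _ t ih =>
    obtain ⟨v, hv, hw⟩ := exists_endsInX1_append_x0pow w
    rw [h] at hw
    subst hw
    set ℓ := (v ++ x0pow t).length
    have hℓ : ℓ = v.length + t := by simp [ℓ, x0pow]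
    have hlead : Finsupp.single t (wordS v) ∈ gradedFamilies ℓ := by
      intro j u hu
      rw [Finsupp.single_apply] at hu
      split_ifs at hu with hj
      · simp only [wordS, Finsupp.support_single _ one_ne_zero, Finset.mem_singleton] at hu
        subst hu hj
        exact ⟨hv, hℓ.symm⟩
      · simp at hu
    set R := shWord v (x0pow t) - wordS (v ++ x0pow t)
    have hR :
        R ∈ Finsupp.supported ℂ ℂ ({w : Word | w.length = ℓ} ∩ {w | trailingX0 w < t}) := by
      rw [Finsupp.supported_inter]
      refine ⟨sub_mem ?_ ?_, shWord_x0pow_sub_mem_supported hv t⟩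
      · simpa [hℓ, x0pow] using shWord_mem_supported_length v (x0pow t)
      · exact Finsupp.single_mem_supported ℂ _ rfl
    rw [Finsupp.supported_eq_span_single] at hR
    have hR' : R ∈ (gradedFamilies ℓ).map decomp0 := by
      refine Submodule.span_le.mpr ?_ hR
      rintro _ ⟨z, ⟨hzℓ, hzt⟩, rfl⟩
      have := ih _ hzt z rfl
      rwa [hzℓ] at this
    have hword : wordS (v ++ x0pow t) = decomp0 (Finsupp.single t (wordS v)) - R := by
      rw [decomp0, Finsupp.lsum_single, shRight_apply, sh_wordS_wordS, sub_sub_cancel]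
    rw [hword]
    exact sub_mem (Submodule.mem_map_of_mem hlead) hR'

lemma exists_hasDecomp0_wordS (w : Word) :
    ∃ f : ℕ →₀ S, HasDecomp0 (wordS w) f ∧ ∀ j, ∀ u ∈ (f j).support, u.length + j = w.length := by
  obtain ⟨f, hf, hfw⟩ := wordS_mem_map_decomp0 w
  exact ⟨f, ⟨fun j u hu => (hf j u hu).1, by rw [← hfw, decomp0_apply]⟩,
    fun j u hu => (hf j u hu).2⟩

lemma _root_.ENNReal.tsum_fin_pi_prod {α : Type*} (g : α → ENNReal) (r : ℕ) :
    ∑' d : Fin r → α, ∏ i, g (d i) = (∑' a, g a) ^ r := by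
  induction r with
  | zero => simp
  | succ r ih =>
    rw [← (Fin.consEquiv fun _ => α).tsum_eq, ENNReal.tsum_prod', pow_succ', ← ih,
      ← ENNReal.tsum_mul_right]
    refine tsum_congr fun a => ?_
    rw [← ENNReal.tsum_mul_left]
    exact tsum_congr fun d => by simp [Fin.prod_univ_succ, Fin.consEquiv]

lemma tsum_ofReal_pow_div_eq_neg_log {x : ℝ} (hx0 : 0 ≤ x) (hx1 : x < 1) :
    ∑' m : ℕ, ENNReal.ofReal (x ^ m / m) = ENNReal.ofReal (-Real.log (1 - x)) := by
  have hsum : HasSum (fun m : ℕ => x ^ m / m) (-Real.log (1 - x)) := by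
    -- the `m = 0` term is `x ^ 0 / 0 = 0`
    rw [← hasSum_nat_add_iff' 1]
    simpa using Real.hasSum_pow_div_log_of_abs_lt_one (abs_lt.mpr ⟨by linarith, hx1⟩)
  rw [← ENNReal.ofReal_tsum_of_nonneg (fun m => by positivity) hsum.summable, hsum.tsum_eq]

lemma pow_le_one_add_pow {L : ℝ} (hL : 0 ≤ L) {s r : ℕ} (h : s ≤ r) : L ^ s ≤ 1 + L ^ r := by
  rcases le_total L 1 with hL1 | hL1
  · linarith [pow_le_one₀ hL hL1 (n := s), pow_nonneg hL r]
  · linarith [pow_le_pow_right₀ hL1 h]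

lemma norm_log_le_one_of_mem_Ioo {z : ℝ} (hz : z ∈ Set.Ioo (1 / 2 : ℝ) 1) :
    ‖Complex.log z‖ ≤ 1 := by
  obtain ⟨hz₀, hz₁⟩ := hz
  rw [← Complex.ofReal_log (by linarith), Complex.norm_real, Real.norm_eq_abs,
    abs_of_neg (Real.log_neg (by linarith) hz₁), ← Real.log_inv]
  have : z⁻¹ < 2 := by rw [inv_lt_comm₀ (by linarith) two_pos]; linarith
  linarith [Real.log_le_sub_one_of_pos (inv_pos.mpr (by linarith : (0 : ℝ) < z))]

namespace Tuples

variable {r : ℕ} (n : Tuples r)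

def extend (i : ℕ) : ℕ := if h : i < r then n.1 ⟨i, h⟩ else 0

def gap (i : ℕ) : ℕ := n.extend i - n.extend (i + 1)

lemma extend_coe_fin (i : Fin r) : n.extend i = n.1 i := dif_pos i.2

lemma extend_length : n.extend r = 0 := dif_neg (lt_irrefl r)

lemma extend_succ_lt {i : ℕ} (hi : i < r) : n.extend (i + 1) < n.extend i := by
  rw [extend, extend, dif_pos hi]
  split_ifs with h
  · exact n.2.1 (Fin.mk_lt_mk.mpr (Nat.lt_succ_self i))
  · exact n.2.2 _

lemma sum_range_gap_add_extend {m : ℕ} (hm : m ≤ r) :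
    ∑ j ∈ Finset.range m, n.gap j + n.extend m = n.extend 0 := by
  induction m with
  | zero => simp
  | succ m ih =>
    have := n.extend_succ_lt (i := m) (by omega)
    rw [Finset.sum_range_succ, gap, ← ih (by omega)]
    omega

lemma extend_eq_sub {i : ℕ} (hi : i ≤ r) :
    n.extend i = ∑ j ∈ Finset.range r, n.gap j - ∑ j ∈ Finset.range i, n.gap j := by
  have hr := n.sum_range_gap_add_extend le_rfl
  have hi := n.sum_range_gap_add_extend hi
  rw [extend_length, add_zero] at hr
  omega

lemma gap_pos {i : ℕ} (hi : i < r) : 0 < n.gap i := by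
  have := n.extend_succ_lt hi
  rw [gap]
  omega

lemma gap_le (i : Fin r) : n.gap i ≤ n.1 i := by
  rw [gap, extend_coe_fin]
  exact Nat.sub_le _ _

lemma sum_gap : ∑ i : Fin r, n.gap i = n.extend 0 := by
  have := n.sum_range_gap_add_extend le_rfl
  rw [Fin.sum_univ_eq_sum_range n.gap]
  rwa [extend_length, add_zero] at this

lemma gap_injective : Function.Injective fun n : Tuples r => fun i : Fin r => n.gap i := by
  intro n n' h
  have hgap : ∀ j < r, n.gap j = n'.gap j := fun j hj => congrFun h ⟨j, hj⟩
  refine Subtype.ext (funext fun i => ?_)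
  rw [← extend_coe_fin, ← extend_coe_fin, n.extend_eq_sub i.2.le, n'.extend_eq_sub i.2.le,
    Finset.sum_congr rfl fun j hj => hgap j (Finset.mem_range.mp hj),
    Finset.sum_congr rfl fun j hj => hgap j ((Finset.mem_range.mp hj).trans i.2)]

lemma norm_numerator_eq_prod_gap (z : ℂ) :
    ‖(if h : 0 < r then z ^ n.1 ⟨0, h⟩ else 1)‖ = ∏ i : Fin r, ‖z‖ ^ n.gap i := by
  rw [Finset.prod_pow_eq_pow_sum, sum_gap, extend]
  split_ifs <;> simp

end Tuples

lemma norm_LiComp_term_le {ks : List ℕ} (hks : ∀ k ∈ ks, 1 ≤ k) (n : Tuples ks.length) (z : ℂ) :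
    ‖(if h : 0 < ks.length then z ^ n.1 ⟨0, h⟩ else 1) /
        ∏ i : Fin ks.length, (n.1 i : ℂ) ^ ks.get i‖ ≤
      ∏ i : Fin ks.length, ‖z‖ ^ n.gap i / n.gap i := by
  rw [norm_div, n.norm_numerator_eq_prod_gap, Finset.prod_div_distrib, norm_prod]
  refine div_le_div_of_nonneg_left (by positivity)
    (Finset.prod_pos fun i _ => Nat.cast_pos.mpr (n.gap_pos i.2))
    (Finset.prod_le_prod (fun i _ => by positivity) fun i _ => ?_)
  rw [norm_pow, Complex.norm_natCast]
  exact_mod_cast (n.gap_le i).trans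
    (Nat.le_self_pow (Nat.one_le_iff_ne_zero.mp (hks _ (List.get_mem ks i))) _)

/-- Through the gaps `d_i = n_i - n_{i+1}` (so `n_1 = Σ d_i` and `d_i ≤ n_i^{k_i}`), the series
is dominated termwise by the expansion of `(Σ_d ‖z‖^d / d)^r`. -/
theorem norm_LiComp_le {ks : List ℕ} (hks : ∀ k ∈ ks, 1 ≤ k) {z : ℂ} (hz : ‖z‖ < 1) :
    ‖LiComp ks z‖ ≤ (-Real.log (1 - ‖z‖)) ^ ks.length := by
  have hL : 0 ≤ -Real.log (1 - ‖z‖) :=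
    neg_nonneg.mpr (Real.log_nonpos (by linarith) (by linarith [norm_nonneg z]))
  set g : ℕ → ENNReal := fun m => ENNReal.ofReal (‖z‖ ^ m / m)
  rw [← ENNReal.ofReal_le_ofReal_iff (by positivity), ofReal_norm]
  calc ‖LiComp ks z‖ₑ
      ≤ ∑' n : Tuples ks.length, ∏ i : Fin ks.length, g (n.gap i) := by
        refine enorm_tsum_le_tsum_enorm.trans (ENNReal.tsum_le_tsum fun n => ?_)
        rw [← ofReal_norm, ← ENNReal.ofReal_prod_of_nonneg fun i _ => by positivity]
        exact ENNReal.ofReal_le_ofReal (norm_LiComp_term_le hks n z)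
    _ ≤ ∑' d : Fin ks.length → ℕ, ∏ i, g (d i) :=
        ENNReal.tsum_comp_le_tsum_of_injective Tuples.gap_injective _
    _ = ENNReal.ofReal ((-Real.log (1 - ‖z‖)) ^ ks.length) := by
        rw [ENNReal.tsum_fin_pi_prod, tsum_ofReal_pow_div_eq_neg_log (norm_nonneg z) hz,
          ENNReal.ofReal_pow hL]

lemma one_le_of_mem_toComp : ∀ {w : Word} {k : ℕ}, k ∈ toComp w → 1 ≤ k
  | [], _, hk => by simp [toComp] at hk
  | true :: w, k, hk => by
    rcases List.mem_cons.mp hk with rfl | hk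
    exacts [le_rfl, one_le_of_mem_toComp hk]
  | false :: w, k, hk => by
    rw [toComp] at hk
    split at hk
    · simp at hk
    · next k' ks' hw =>
      rcases List.mem_cons.mp hk with rfl | hk
      · omega
      · exact one_le_of_mem_toComp (hw ▸ List.mem_cons_of_mem _ hk)

lemma length_toComp_le : ∀ w : Word, (toComp w).length ≤ w.length
  | [] => by simp [toComp]
  | true :: w => by simpa [toComp] using length_toComp_le w
  | false :: w => by
    have := length_toComp_le w
    rw [toComp]
    split <;> simp_all
    omega

lemma norm_LiS0_le {x : S} {r : ℕ} (hx : ∀ u ∈ x.support, u.length ≤ r) {z : ℂ} (hz : ‖z‖ < 1) :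
    ‖LiS0 x z‖ ≤ (∑ u ∈ x.support, ‖x u‖) * (1 + (-Real.log (1 - ‖z‖)) ^ r) := by
  have hL : 0 ≤ -Real.log (1 - ‖z‖) :=
    neg_nonneg.mpr (Real.log_nonpos (by linarith) (by linarith [norm_nonneg z]))
  rw [LiS0, Finsupp.sum, Finset.sum_mul]
  refine (norm_sum_le _ _).trans (Finset.sum_le_sum fun u hu => ?_)
  rw [norm_mul]
  exact mul_le_mul_of_nonneg_left ((norm_LiComp_le (fun _ => one_le_of_mem_toComp) hz).trans
    (pow_le_one_add_pow hL ((length_toComp_le u).trans (hx u hu)))) (norm_nonneg _)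

lemma norm_Li_le {u : S} {f : ℕ →₀ S} (hf : HasDecomp0 u f) {r : ℕ}
    (hr : ∀ j, ∀ w ∈ (f j).support, w.length ≤ r) {z : ℂ} (hz : ‖z‖ < 1)
    (hlog : ‖Complex.log z‖ ≤ 1) :
    ‖Li u z‖ ≤
      (∑ j ∈ f.support, ∑ w ∈ (f j).support, ‖f j w‖) * (1 + (-Real.log (1 - ‖z‖)) ^ r) := by
  rw [Li_eq_of_hasDecomp0 hf, Finsupp.sum, Finset.sum_mul]
  refine (norm_sum_le _ _).trans (Finset.sum_le_sum fun j _ => ?_)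
  calc ‖LiS0 (f j) z * Complex.log z ^ j / (Nat.factorial j : ℂ)‖
      ≤ ‖LiS0 (f j) z‖ := by
        rw [norm_div, norm_mul, norm_pow, Complex.norm_natCast]
        refine div_le_of_le_mul₀ (by positivity) (norm_nonneg _) ?_
        nlinarith [pow_le_one₀ (norm_nonneg _) hlog (n := j), norm_nonneg (LiS0 (f j) z),
          (Nat.one_le_cast (α := ℝ)).mpr (Nat.factorial_pos j)]
    _ ≤ _ := norm_LiS0_le (hr j) hz

/-- Logarithmic growth of multiple polylogarithms at `z = 1`: for every
word `w` of length `r`, there is `C > 0` with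
`|Li(w; z)| ≤ C (1 + |log(1-z)|^r)` for all `z ∈ (1/2, 1)`. -/
theorem Li_log_growth (w : Word) :
    ∃ C : ℝ, 0 < C ∧ ∀ z : ℝ, z ∈ Set.Ioo (1 / 2 : ℝ) 1 →
      ‖Li (wordS w) (z : ℂ)‖ ≤ C * (1 + |Real.log (1 - z)| ^ w.length) := by
  obtain ⟨f, hf, hflen⟩ := exists_hasDecomp0_wordS w
  set C₀ := ∑ j ∈ f.support, ∑ u ∈ (f j).support, ‖f j u‖
  refine ⟨C₀ + 1, by positivity, fun z hz => ?_⟩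
  have hnorm : ‖(z : ℂ)‖ = z := by rw [Complex.norm_real, Real.norm_of_nonneg (by linarith [hz.1])]
  have habs : |Real.log (1 - z)| = -Real.log (1 - z) :=
    abs_of_neg (Real.log_neg (by linarith [hz.2]) (by linarith [hz.1]))
  have hbound := norm_Li_le hf (r := w.length) (fun j u hu => by linarith [hflen j u hu])
    (by rw [hnorm]; exact hz.2) (norm_log_le_one_of_mem_Ioo hz)
  rw [hnorm, ← habs] at hbound
  exact hbound.trans (by gcongr; linarith)

end

end MZVRH
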